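/- arXiv:1610.03379 — 2 statements merged into one kernel-verified Lean document; each statement's English description precedes it below -/
import Mathlib

section
/- Let 1 < p < ∞, k ∈ ℕ, α ∈ ℝ with n ≠ α p. For every complex-valued f ∈ C_0^∞(ℝⁿ \ {0}), the higher-order weighted inequality ‖ |x|^{−α} f ‖_{L^p(ℝⁿ)} ≤ |p/(n − α p)|^k · ‖ |x|^{−α} E^k f ‖_{L^p(ℝⁿ)} holds, where E^k denotes the k-th iterate of the Euler operator E f(x) = x·∇f(x). -/
open MeasureTheory Real

/-- The Euler operator `E f (x) = x·∇f(x)` as an operator on functions. -/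
noncomputable def eulerOp {n : ℕ} :
    (EuclideanSpace ℝ (Fin n) → ℂ) → (EuclideanSpace ℝ (Fin n) → ℂ) :=
  fun f x => fderiv ℝ f x x

section Aux

variable {n : ℕ}

/-- Derivative of `‖z s‖ ^ p` for a differentiable complex valued curve, `1 < p`. -/
lemma hasDerivAt_norm_rpow_comp {p : ℝ} (hp : 1 < p) {z : ℝ → ℂ} {z' : ℂ} {t : ℝ}
    (hz : HasDerivAt z z' t) :
    HasDerivAt (fun s => ‖z s‖ ^ p)
      (p * ‖z t‖ ^ (p - 2) * ((starRingEnd ℂ) (z t) * z').re) t := by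
  have hp0 : (0:ℝ) < p := by linarith
  by_cases h : z t = 0
  · have hzero : p * ‖z t‖ ^ (p - 2) * ((starRingEnd ℂ) (z t) * z').re = 0 := by
      simp [h]
    rw [hzero, hasDerivAt_iff_isLittleO]
    simp only [h, norm_zero, Real.zero_rpow hp0.ne', sub_zero, smul_zero]
    have hO : (fun s => ‖z s‖) =O[nhds t] fun s => s - t := by
      simpa [h] using hz.isBigO_sub.norm_left
    have ho : (fun s => ‖z s‖ ^ (p - 1)) =o[nhds t] (fun _ => (1:ℝ)) := by
      rw [Asymptotics.isLittleO_one_iff]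
      have h1 : Filter.Tendsto (fun s => ‖z s‖) (nhds t) (nhds 0) := by
        simpa [h] using hz.continuousAt.norm.tendsto
      have h2 : ContinuousAt (fun r : ℝ => r ^ (p - 1)) 0 :=
        Real.continuousAt_rpow_const 0 (p - 1) (Or.inr (by linarith))
      have h3 := h2.tendsto.comp h1
      simpa [Function.comp_def, Real.zero_rpow (by linarith : p - 1 ≠ 0)] using h3
    have key : (fun s => ‖z s‖ ^ p) = fun s => ‖z s‖ * ‖z s‖ ^ (p - 1) := by
      funext s
      conv_lhs => rw [show p = 1 + (p - 1) by ring]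
      rw [Real.rpow_add' (norm_nonneg _) (by linarith), Real.rpow_one]
    rw [key]
    simpa using hO.mul_isLittleO ho
  · have hre : HasDerivAt (fun s => (z s).re) z'.re t :=
      Complex.reCLM.hasFDerivAt.comp_hasDerivAt t hz
    have him : HasDerivAt (fun s => (z s).im) z'.im t :=
      Complex.imCLM.hasFDerivAt.comp_hasDerivAt t hz
    have hsq : HasDerivAt (fun s => Complex.normSq (z s))
        (2 * ((starRingEnd ℂ) (z t) * z').re) t := by
      have h1 := (hre.mul hre).add (him.mul him)
      have h2 : (fun s => Complex.normSq (z s)) =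
          fun s => (z s).re * (z s).re + (z s).im * (z s).im := by
        funext s; simp [Complex.normSq_apply]
      rw [h2]
      refine h1.congr_deriv ?_
      simp [Complex.mul_re, Complex.conj_re, Complex.conj_im]
      ring
    have hpos : 0 < Complex.normSq (z t) := Complex.normSq_pos.2 h
    have hr : HasDerivAt (fun y : ℝ => y ^ (p / 2))
        ((p / 2) * Complex.normSq (z t) ^ (p / 2 - 1)) (Complex.normSq (z t)) :=
      Real.hasDerivAt_rpow_const (Or.inl hpos.ne')
    have hcomp := hr.comp t hsq
    have hfun : (fun s => ‖z s‖ ^ p) =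
        (fun y : ℝ => y ^ (p / 2)) ∘ (fun s => Complex.normSq (z s)) := by
      funext s
      simp only [Function.comp_apply]
      rw [Complex.normSq_eq_norm_sq, ← Real.rpow_natCast (‖z s‖) 2,
        ← Real.rpow_mul (norm_nonneg _)]
      norm_num
      congr 1
      ring
    rw [hfun]
    refine hcomp.congr_deriv ?_
    have hns : Complex.normSq (z t) ^ (p / 2 - 1) = ‖z t‖ ^ (p - 2) := by
      rw [Complex.normSq_eq_norm_sq, ← Real.rpow_natCast (‖z t‖) 2,
        ← Real.rpow_mul (norm_nonneg _)]
      congr 1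
      ring
    rw [hns]
    ring

lemma eulerOp_contDiff {f : EuclideanSpace ℝ (Fin n) → ℂ} (hf : ContDiff ℝ (⊤ : ℕ∞) f) :
    ContDiff ℝ (⊤ : ℕ∞) (eulerOp f) :=
  (hf.fderiv_right (by simp)).clm_apply contDiff_id

lemma tsupport_eulerOp_subset {f : EuclideanSpace ℝ (Fin n) → ℂ} :
    tsupport (eulerOp f) ⊆ tsupport f := by
  apply closure_minimal _ (isClosed_tsupport f)
  intro x hx
  by_contra hxf
  apply hx
  show fderiv ℝ f x x = 0
  rw [fderiv_of_notMem_tsupport ℝ hxf]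
  rfl

lemma hasCompactSupport_eulerOp {f : EuclideanSpace ℝ (Fin n) → ℂ}
    (hfc : HasCompactSupport f) : HasCompactSupport (eulerOp f) :=
  IsCompact.of_isClosed_subset hfc (isClosed_tsupport _) tsupport_eulerOp_subset

lemma hasDerivAt_comp_exp_smul {f : EuclideanSpace ℝ (Fin n) → ℂ} (hf : ContDiff ℝ (⊤ : ℕ∞) f)
    (x : EuclideanSpace ℝ (Fin n)) (t : ℝ) :
    HasDerivAt (fun s => f (Real.exp s • x)) (eulerOp f (Real.exp t • x)) t := by
  have hγ : HasDerivAt (fun s : ℝ => Real.exp s • x) (Real.exp t • x) t :=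
    (Real.hasDerivAt_exp t).smul_const x
  exact ((hf.differentiable (by simp) (Real.exp t • x)).hasFDerivAt).comp_hasDerivAt t hγ

lemma rpow_add_bound {a b s : ℝ} (ha : 0 < a) (h1 : a ≤ s) (h2 : s ≤ b) (β : ℝ) :
    s ^ β ≤ a ^ β + b ^ β := by
  rcases le_or_gt 0 β with hβ | hβ
  · exact le_add_of_nonneg_of_le (Real.rpow_nonneg ha.le β)
      (Real.rpow_le_rpow (ha.le.trans h1) h2 hβ)
  · exact le_add_of_le_of_nonneg (Real.rpow_le_rpow_of_nonpos ha h1 hβ.le)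
      (Real.rpow_nonneg ((ha.trans_le (h1.trans h2)).le) β)

lemma integrable_weight_mul {β : ℝ} {K : Set (EuclideanSpace ℝ (Fin n))} (hK : IsCompact K)
    (h0 : (0 : EuclideanSpace ℝ (Fin n)) ∉ K) {g : EuclideanSpace ℝ (Fin n) → ℝ}
    (hg : AEStronglyMeasurable g volume) {C : ℝ} (hbd : ∀ x ∈ K, |g x| ≤ C)
    (hsupp : ∀ x ∉ K, g x = 0) :
    Integrable (fun x : EuclideanSpace ℝ (Fin n) => ‖x‖ ^ β * g x) := by
  obtain ⟨r, hr, hball⟩ : ∃ r > 0, Metric.ball (0 : EuclideanSpace ℝ (Fin n)) r ⊆ Kᶜ :=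
    Metric.isOpen_iff.1 hK.isClosed.isOpen_compl 0 h0
  obtain ⟨R0, hR0⟩ := hK.isBounded.subset_closedBall 0
  have hR : K ⊆ Metric.closedBall 0 |R0| :=
    hR0.trans (Metric.closedBall_subset_closedBall (le_abs_self R0))
  set W : ℝ := r ^ β + |R0| ^ β with hW
  have hWnn : 0 ≤ W := add_nonneg (Real.rpow_nonneg hr.le _) (Real.rpow_nonneg (abs_nonneg _) _)
  have hmeas : AEStronglyMeasurable (fun x : EuclideanSpace ℝ (Fin n) => ‖x‖ ^ β * g x) volume :=
    (((measurable_norm.pow_const β).aemeasurable.aestronglyMeasurable)).mul hg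
  apply Integrable.mono' (g := Set.indicator K fun _ => W * |C|)
  · exact (integrable_indicator_iff hK.isClosed.measurableSet).2
      (integrableOn_const hK.measure_lt_top.ne)
  · exact hmeas
  · refine Filter.Eventually.of_forall fun x => ?_
    by_cases hx : x ∈ K
    · rw [Set.indicator_of_mem hx]
      have h1 : r ≤ ‖x‖ := by
        by_contra hlt
        push_neg at hlt
        exact (hball (by simpa [Metric.mem_ball] using hlt)) hx
      have h2 : ‖x‖ ≤ |R0| := by simpa using hR hx
      have hw : ‖x‖ ^ β ≤ W := rpow_add_bound hr h1 h2 β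
      rw [Real.norm_eq_abs, abs_mul, abs_of_nonneg (Real.rpow_nonneg (norm_nonneg _) _)]
      exact mul_le_mul hw (le_trans (hbd x hx) (le_abs_self C)) (abs_nonneg _) hWnn
    · rw [Set.indicator_of_notMem hx, hsupp x hx, mul_zero]
      simp

set_option maxHeartbeats 1000000 in
lemma base_ineq (p β : ℝ) (hp : 1 < p) (hc : (n : ℝ) + β ≠ 0)
    (f : EuclideanSpace ℝ (Fin n) → ℂ) (hf : ContDiff ℝ (⊤ : ℕ∞) f) (hfc : HasCompactSupport f)
    (hf0 : (0 : EuclideanSpace ℝ (Fin n)) ∉ tsupport f) :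
    (∫ x, ‖x‖ ^ β * ‖f x‖ ^ p) ^ (1 / p) ≤
      (p / |(n : ℝ) + β|) * (∫ x, ‖x‖ ^ β * ‖eulerOp f x‖ ^ p) ^ (1 / p) := by
  have hp0 : (0:ℝ) < p := by linarith
  have hp1 : (0:ℝ) < p - 1 := by linarith
  set q : ℝ := p / (p - 1) with hqdef
  have hpq : p.HolderConjugate q := Real.HolderConjugate.conjExponent hp
  -- bounds for f and its Euler derivative
  obtain ⟨M, hM⟩ := hfc.exists_bound_of_continuous hf.continuous
  have hM0 : 0 ≤ M := le_trans (norm_nonneg _) (hM 0)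
  have hEcont : Continuous (eulerOp f) := (eulerOp_contDiff hf).continuous
  have hEsupp : tsupport (eulerOp f) ⊆ tsupport f := tsupport_eulerOp_subset
  have hEfc : HasCompactSupport (eulerOp f) := hasCompactSupport_eulerOp hfc
  obtain ⟨M', hM'⟩ := hEfc.exists_bound_of_continuous hEcont
  have hM'0 : 0 ≤ M' := le_trans (norm_nonneg _) (hM' 0)
  have hEzero : ∀ y, y ∉ tsupport f → eulerOp f y = 0 := fun y hy =>
    image_eq_zero_of_notMem_tsupport (fun hmem => hy (hEsupp hmem))
  -- radii
  obtain ⟨r, hr0, hball⟩ : ∃ r > 0, Metric.ball (0 : EuclideanSpace ℝ (Fin n)) r ⊆ (tsupport f)ᶜ :=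
    Metric.isOpen_iff.1 (isClosed_tsupport f).isOpen_compl 0 hf0
  have hKr : ∀ x ∈ tsupport f, r ≤ ‖x‖ := by
    intro x hx
    by_contra hlt
    push_neg at hlt
    exact (hball (by simpa [Metric.mem_ball] using hlt)) hx
  obtain ⟨R0, hR0⟩ := hfc.isBounded.subset_closedBall 0
  set R : ℝ := |R0| with hRdef
  have hRnn : (0:ℝ) ≤ R := abs_nonneg _
  have hKR : ∀ x ∈ tsupport f, ‖x‖ ≤ R := by
    intro x hx
    have := hR0 hx
    rw [Metric.mem_closedBall, dist_zero_right] at this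
    exact this.trans (le_abs_self R0)
  -- the integrand functions
  set A : ℝ := ∫ x, ‖x‖ ^ β * ‖f x‖ ^ p with hAdef
  set B : ℝ := ∫ x, ‖x‖ ^ β * ‖eulerOp f x‖ ^ p with hBdef
  set G : EuclideanSpace ℝ (Fin n) → ℝ :=
    fun y => p * ‖f y‖ ^ (p - 2) * ((starRingEnd ℂ) (f y) * eulerOp f y).re with hGdef
  set D : EuclideanSpace ℝ (Fin n) → ℝ := fun x => ‖x‖ ^ β * G x with hDdef
  set F : ℝ → EuclideanSpace ℝ (Fin n) → ℝ :=
    fun t x => ‖x‖ ^ β * ‖f (Real.exp t • x)‖ ^ p with hFdef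
  have hAnn : 0 ≤ A := by
    rw [hAdef]
    exact integral_nonneg fun x =>
      mul_nonneg (Real.rpow_nonneg (norm_nonneg _) _) (Real.rpow_nonneg (norm_nonneg _) _)
  have hBnn : 0 ≤ B := by
    rw [hBdef]
    exact integral_nonneg fun x =>
      mul_nonneg (Real.rpow_nonneg (norm_nonneg _) _) (Real.rpow_nonneg (norm_nonneg _) _)
  -- properties of G
  have hGzero : ∀ y, y ∉ tsupport f → G y = 0 := by
    intro y hy
    have h1 : f y = 0 := image_eq_zero_of_notMem_tsupport hy
    simp [hGdef, h1]
  have hGle : ∀ y, |G y| ≤ p * (‖f y‖ ^ (p - 1) * ‖eulerOp f y‖) := by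
    intro y
    have hre : |((starRingEnd ℂ) (f y) * eulerOp f y).re| ≤ ‖f y‖ * ‖eulerOp f y‖ := by
      calc |((starRingEnd ℂ) (f y) * eulerOp f y).re|
          ≤ ‖(starRingEnd ℂ) (f y) * eulerOp f y‖ := Complex.abs_re_le_norm _
        _ = ‖f y‖ * ‖eulerOp f y‖ := by
            rw [norm_mul, Complex.norm_conj]
    have h2 : ‖f y‖ ^ (p - 2) * ‖f y‖ = ‖f y‖ ^ (p - 1) := by
      conv_rhs => rw [show p - 1 = (p - 2) + 1 by ring]
      rw [Real.rpow_add' (norm_nonneg _) (by linarith), Real.rpow_one]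
    have h3 : |G y| = p * (‖f y‖ ^ (p - 2) * |((starRingEnd ℂ) (f y) * eulerOp f y).re|) := by
      simp only [hGdef]
      rw [abs_mul, abs_mul, abs_of_pos hp0,
        abs_of_nonneg (Real.rpow_nonneg (norm_nonneg _) _), mul_assoc]
    rw [h3]
    have h4 : ‖f y‖ ^ (p - 2) * |((starRingEnd ℂ) (f y) * eulerOp f y).re|
        ≤ ‖f y‖ ^ (p - 2) * (‖f y‖ * ‖eulerOp f y‖) :=
      mul_le_mul_of_nonneg_left hre (Real.rpow_nonneg (norm_nonneg _) _)
    have h5 : ‖f y‖ ^ (p - 2) * (‖f y‖ * ‖eulerOp f y‖) = ‖f y‖ ^ (p - 1) * ‖eulerOp f y‖ := by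
      rw [← mul_assoc, h2]
    exact mul_le_mul_of_nonneg_left (h4.trans_eq h5) hp0.le
  have hGbd : ∀ y, |G y| ≤ p * (M ^ (p - 1) * M') := by
    intro y
    refine (hGle y).trans (mul_le_mul_of_nonneg_left ?_ hp0.le)
    exact mul_le_mul (Real.rpow_le_rpow (norm_nonneg _) (hM y) (by linarith)) (hM' y)
      (norm_nonneg _) (Real.rpow_nonneg hM0 _)
  have hGmeas : Measurable G := by
    simp only [hGdef]
    exact (measurable_const.mul (hf.continuous.norm.measurable.pow_const _)).mul
      (Complex.measurable_re.comp ((continuous_star.comp hf.continuous).mul hEcont).measurable)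
  -- pointwise derivative
  have hFderiv : ∀ (x : EuclideanSpace ℝ (Fin n)) (t : ℝ),
      HasDerivAt (fun s => F s x) (‖x‖ ^ β * G (Real.exp t • x)) t := by
    intro x t
    have h1 := hasDerivAt_norm_rpow_comp hp (hasDerivAt_comp_exp_smul hf x t)
    have h2 := h1.const_mul (‖x‖ ^ β)
    simp only [hFdef, hGdef]
    exact h2
  -- integrability of the various integrands
  have hIf : Integrable (fun x : EuclideanSpace ℝ (Fin n) => ‖x‖ ^ β * ‖f x‖ ^ p) := by
    refine integrable_weight_mul hfc hf0
      ((hf.continuous.norm.measurable.pow_const p).aestronglyMeasurable)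
      (C := M ^ p) (fun x _ => ?_) (fun x hx => ?_)
    · rw [abs_of_nonneg (Real.rpow_nonneg (norm_nonneg _) _)]
      exact Real.rpow_le_rpow (norm_nonneg _) (hM x) hp0.le
    · rw [image_eq_zero_of_notMem_tsupport hx, norm_zero, Real.zero_rpow hp0.ne']
  have hIE : Integrable (fun x : EuclideanSpace ℝ (Fin n) => ‖x‖ ^ β * ‖eulerOp f x‖ ^ p) := by
    refine integrable_weight_mul hfc hf0
      ((hEcont.norm.measurable.pow_const p).aestronglyMeasurable)
      (C := M' ^ p) (fun x _ => ?_) (fun x hx => ?_)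
    · rw [abs_of_nonneg (Real.rpow_nonneg (norm_nonneg _) _)]
      exact Real.rpow_le_rpow (norm_nonneg _) (hM' x) hp0.le
    · rw [hEzero x hx, norm_zero, Real.zero_rpow hp0.ne']
  have hImaj : Integrable
      (fun x : EuclideanSpace ℝ (Fin n) => ‖x‖ ^ β * (p * (‖f x‖ ^ (p - 1) * ‖eulerOp f x‖))) := by
    refine integrable_weight_mul hfc hf0 ?_ (C := p * (M ^ (p - 1) * M'))
      (fun x _ => ?_) (fun x hx => ?_)
    · exact (measurable_const.mul
        ((hf.continuous.norm.measurable.pow_const _).mul hEcont.norm.measurable)).aestronglyMeasurable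
    · rw [abs_of_nonneg (mul_nonneg hp0.le (mul_nonneg (Real.rpow_nonneg (norm_nonneg _) _)
        (norm_nonneg _)))]
      refine mul_le_mul_of_nonneg_left ?_ hp0.le
      exact mul_le_mul (Real.rpow_le_rpow (norm_nonneg _) (hM x) (by linarith)) (hM' x)
        (norm_nonneg _) (Real.rpow_nonneg hM0 _)
    · rw [image_eq_zero_of_notMem_tsupport hx, norm_zero, Real.zero_rpow (by linarith : p - 1 ≠ 0)]
      ring
  -- the annulus S and the Lipschitz bound
  set S : Set (EuclideanSpace ℝ (Fin n)) :=
    (fun x : EuclideanSpace ℝ (Fin n) => ‖x‖) ⁻¹' Set.Icc (r * Real.exp (-1)) (R * Real.exp 1)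
    with hSdef
  have hSclosed : IsClosed S := isClosed_Icc.preimage continuous_norm
  have hSsub : S ⊆ Metric.closedBall 0 (R * Real.exp 1) := by
    intro x hx
    simp only [hSdef, Set.mem_preimage, Set.mem_Icc] at hx
    rw [Metric.mem_closedBall, dist_zero_right]
    exact hx.2
  have hSmem : ∀ (t : ℝ) (x : EuclideanSpace ℝ (Fin n)), |t| < 1 →
      Real.exp t • x ∈ tsupport f → x ∈ S := by
    intro t x ht hmem
    have h1 : r ≤ ‖Real.exp t • x‖ := hKr _ hmem
    have h2 : ‖Real.exp t • x‖ ≤ R := hKR _ hmem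
    have hnorm : ‖Real.exp t • x‖ = Real.exp t * ‖x‖ := by
      rw [norm_smul, Real.norm_eq_abs, abs_of_pos (Real.exp_pos t)]
    rw [hnorm] at h1 h2
    obtain ⟨ht1, ht2⟩ := abs_lt.1 ht
    have he1 : Real.exp t ≤ Real.exp 1 := Real.exp_le_exp.2 ht2.le
    have he2 : Real.exp (-1) ≤ Real.exp t := Real.exp_le_exp.2 (by linarith)
    have hx0 : (0:ℝ) ≤ ‖x‖ := norm_nonneg x
    have hept : (0:ℝ) < Real.exp t := Real.exp_pos t
    simp only [hSdef, Set.mem_preimage, Set.mem_Icc]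
    constructor
    · have h3 : r ≤ Real.exp 1 * ‖x‖ := h1.trans (by nlinarith)
      have h4 : Real.exp (-1) * r ≤ Real.exp (-1) * (Real.exp 1 * ‖x‖) := by
        nlinarith [Real.exp_pos (-1)]
      rw [← mul_assoc, ← Real.exp_add] at h4
      rw [show (-1:ℝ) + 1 = 0 by norm_num, Real.exp_zero, one_mul] at h4
      linarith [h4]
    · have h5 : Real.exp (-1) * ‖x‖ ≤ Real.exp t * ‖x‖ := by nlinarith
      have h6 : Real.exp (-1) * ‖x‖ ≤ R := le_trans h5 h2
      have h7 : Real.exp 1 * (Real.exp (-1) * ‖x‖) ≤ Real.exp 1 * R := by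
        nlinarith [Real.exp_pos 1]
      rw [← mul_assoc, ← Real.exp_add] at h7
      rw [show (1:ℝ) + -1 = 0 by norm_num, Real.exp_zero, one_mul] at h7
      linarith [h7]
  set wS : ℝ := (r * Real.exp (-1)) ^ β + (R * Real.exp 1) ^ β with hwSdef
  have hwS0 : 0 ≤ wS :=
    add_nonneg (Real.rpow_nonneg (mul_nonneg hr0.le (Real.exp_pos _).le) _)
      (Real.rpow_nonneg (mul_nonneg hRnn (Real.exp_pos _).le) _)
  have hwS : ∀ x ∈ S, ‖x‖ ^ β ≤ wS := by
    intro x hx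
    simp only [hSdef, Set.mem_preimage, Set.mem_Icc] at hx
    exact rpow_add_bound (mul_pos hr0 (Real.exp_pos _)) hx.1 hx.2 β
  set Cb : ℝ := wS * (p * (M ^ (p - 1) * M')) with hCbdef
  have hCb0 : 0 ≤ Cb :=
    mul_nonneg hwS0 (mul_nonneg hp0.le (mul_nonneg (Real.rpow_nonneg hM0 _) hM'0))
  -- hypotheses of the dominated-derivative theorem
  have hFmeas : ∀ᶠ t in nhds (0:ℝ), AEStronglyMeasurable (F t) volume := by
    refine Filter.Eventually.of_forall fun t => ?_
    simp only [hFdef]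
    exact ((measurable_norm.pow_const β).mul
      (((hf.continuous.comp (continuous_const_smul (Real.exp t))).norm.measurable).pow_const
        p)).aestronglyMeasurable
  have hF0eq : F 0 = fun x : EuclideanSpace ℝ (Fin n) => ‖x‖ ^ β * ‖f x‖ ^ p := by
    funext x
    simp [hFdef, Real.exp_zero, one_smul]
  have hFint : Integrable (F 0) := by rw [hF0eq]; exact hIf
  have hDmeas : AEStronglyMeasurable D volume := by
    rw [hDdef]
    exact ((measurable_norm.pow_const β).mul hGmeas).aestronglyMeasurable
  have hlip : ∀ᵐ x ∂(volume : Measure (EuclideanSpace ℝ (Fin n))),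
      LipschitzOnWith (Real.nnabs (S.indicator (fun _ => Cb) x)) (fun t => F t x)
        (Metric.ball (0:ℝ) 1) := by
    refine Filter.Eventually.of_forall fun x => ?_
    refine (convex_ball (0:ℝ) 1).lipschitzOnWith_of_nnnorm_hasDerivWithin_le
      (f' := fun t => ‖x‖ ^ β * G (Real.exp t • x))
      (fun t _ => (hFderiv x t).hasDerivWithinAt) ?_
    intro t htm
    have ht : |t| < 1 := by simpa [Real.dist_eq] using htm
    rw [← NNReal.coe_le_coe, coe_nnnorm, Real.coe_nnabs, Real.norm_eq_abs]
    show |‖x‖ ^ β * G (Real.exp t • x)| ≤ |S.indicator (fun _ => Cb) x|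
    by_cases hmem : Real.exp t • x ∈ tsupport f
    · have hxS : x ∈ S := hSmem t x ht hmem
      rw [Set.indicator_of_mem hxS, abs_of_nonneg hCb0]
      have h1 : |‖x‖ ^ β * G (Real.exp t • x)| = ‖x‖ ^ β * |G (Real.exp t • x)| := by
        rw [abs_mul, abs_of_nonneg (Real.rpow_nonneg (norm_nonneg _) _)]
      rw [h1, hCbdef]
      exact mul_le_mul (hwS x hxS) (hGbd _)
        (abs_nonneg _) hwS0
    · rw [hGzero _ hmem, mul_zero, abs_zero]
      exact abs_nonneg _
  have hbound_int : Integrable (S.indicator fun _ => Cb)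
      (volume : Measure (EuclideanSpace ℝ (Fin n))) :=
    (integrable_indicator_iff hSclosed.measurableSet).2
      (integrableOn_const ((measure_mono hSsub).trans_lt measure_closedBall_lt_top).ne)
  have hdiff : ∀ᵐ x ∂(volume : Measure (EuclideanSpace ℝ (Fin n))),
      HasDerivAt (fun t => F t x) (D x) 0 := by
    refine Filter.Eventually.of_forall fun x => ?_
    have h1 := hFderiv x 0
    rw [Real.exp_zero, one_smul] at h1
    exact h1
  obtain ⟨hDint, hderiv⟩ :=
    hasDerivAt_integral_of_dominated_loc_of_lip (F := F) (F' := D)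
      (bound := S.indicator fun _ => Cb) (Metric.ball_mem_nhds 0 one_pos) hFmeas hFint hDmeas hlip hbound_int hdiff
  -- scaling identity for the integral of F t
  have hφ : ∀ t : ℝ, (∫ x, F t x) = Real.exp (-(((n:ℝ) + β) * t)) * A := by
    intro t
    have hne : Real.exp (β * t) ≠ 0 := (Real.exp_pos _).ne'
    have h1 : ∀ x : EuclideanSpace ℝ (Fin n),
        (fun y : EuclideanSpace ℝ (Fin n) => ‖y‖ ^ β * ‖f y‖ ^ p) (Real.exp t • x)
          = Real.exp (β * t) * F t x := by
      intro x
      show ‖Real.exp t • x‖ ^ β * ‖f (Real.exp t • x)‖ ^ p = _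
      rw [norm_smul, Real.norm_eq_abs, abs_of_pos (Real.exp_pos t),
        Real.mul_rpow (Real.exp_pos t).le (norm_nonneg x), ← Real.exp_mul, mul_comm t β]
      simp only [hFdef]
      ring
    have e2 : Real.exp (β * t) * (∫ x, F t x) = Real.exp (-((n:ℝ) * t)) * A := by
      rw [← integral_const_mul]
      calc (∫ x, Real.exp (β * t) * F t x)
          = ∫ x, (fun y : EuclideanSpace ℝ (Fin n) => ‖y‖ ^ β * ‖f y‖ ^ p) (Real.exp t • x) := by
            refine integral_congr_ae (Filter.Eventually.of_forall fun x => ?_)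
            rw [h1 x]
        _ = |((Real.exp t) ^ Module.finrank ℝ (EuclideanSpace ℝ (Fin n)))⁻¹| •
              ∫ y, ‖y‖ ^ β * ‖f y‖ ^ p :=
            Measure.integral_comp_smul volume
              (fun y : EuclideanSpace ℝ (Fin n) => ‖y‖ ^ β * ‖f y‖ ^ p) (Real.exp t)
        _ = Real.exp (-((n:ℝ) * t)) * A := by
            rw [finrank_euclideanSpace_fin, smul_eq_mul, ← Real.exp_nat_mul, ← Real.exp_neg,
              abs_of_pos (Real.exp_pos _), ← hAdef]
    refine mul_left_cancel₀ hne ?_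
    rw [e2, ← mul_assoc, ← Real.exp_add]
    rw [show β * t + -(((n:ℝ) + β) * t) = -((n:ℝ) * t) by ring]
  have hderiv2 : HasDerivAt (fun t : ℝ => ∫ x, F t x) (-((n:ℝ) + β) * A) 0 := by
    have heq : (fun t : ℝ => ∫ x, F t x)
        = fun t : ℝ => Real.exp (-(((n:ℝ) + β)) * t) * A := by
      funext t
      rw [hφ t]
      ring_nf
    rw [heq]
    have h1 : HasDerivAt (fun t : ℝ => -(((n:ℝ) + β)) * t) (-(((n:ℝ) + β)) * 1) 0 :=
      (hasDerivAt_id (0:ℝ)).const_mul _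
    have h2 := (h1.exp).mul_const A
    have h3 : Real.exp (-(((n:ℝ) + β)) * 0) * (-(((n:ℝ) + β)) * 1) * A = -((n:ℝ) + β) * A := by
      simp
    rw [h3] at h2
    exact h2
  have key : (∫ x, D x) = -((n:ℝ) + β) * A := hderiv.unique hderiv2
  -- Hölder inequality step
  set u : EuclideanSpace ℝ (Fin n) → ℝ :=
    fun x => (‖x‖ ^ β) ^ (1 / q) * ‖f x‖ ^ (p - 1) with hudef
  set v : EuclideanSpace ℝ (Fin n) → ℝ :=
    fun x => (‖x‖ ^ β) ^ (1 / p) * ‖eulerOp f x‖ with hvdef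
  have hq0 : (0:ℝ) < q := hpq.symm.pos
  have hqp : 1 / q + 1 / p = 1 := by
    rw [one_div, one_div, add_comm]
    exact hpq.inv_add_inv_eq_one
  have huq : ∀ x, u x ^ q = ‖x‖ ^ β * ‖f x‖ ^ p := by
    intro x
    simp only [hudef]
    rw [Real.mul_rpow (Real.rpow_nonneg (Real.rpow_nonneg (norm_nonneg _) _) _)
      (Real.rpow_nonneg (norm_nonneg _) _),
      ← Real.rpow_mul (Real.rpow_nonneg (norm_nonneg x) β) (1/q) q,
      ← Real.rpow_mul (norm_nonneg (f x)) (p-1) q,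
      one_div, inv_mul_cancel₀ hq0.ne', Real.rpow_one, hpq.sub_one_mul_conj]
  have hvp : ∀ x, v x ^ p = ‖x‖ ^ β * ‖eulerOp f x‖ ^ p := by
    intro x
    simp only [hvdef]
    rw [Real.mul_rpow (Real.rpow_nonneg (Real.rpow_nonneg (norm_nonneg _) _) _) (norm_nonneg _),
      ← Real.rpow_mul (Real.rpow_nonneg (norm_nonneg x) β) (1/p) p, one_div,
      inv_mul_cancel₀ hp0.ne', Real.rpow_one]
  have huv : ∀ x, ‖x‖ ^ β * (‖f x‖ ^ (p - 1) * ‖eulerOp f x‖) = u x * v x := by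
    intro x
    simp only [hudef, hvdef]
    have hsplit : (‖x‖ ^ β) ^ (1 / q) * (‖x‖ ^ β) ^ (1 / p) = ‖x‖ ^ β := by
      rw [← Real.rpow_add' (Real.rpow_nonneg (norm_nonneg _) _) (by rw [hqp]; norm_num), hqp,
        Real.rpow_one]
    calc ‖x‖ ^ β * (‖f x‖ ^ (p - 1) * ‖eulerOp f x‖)
        = ((‖x‖ ^ β) ^ (1 / q) * (‖x‖ ^ β) ^ (1 / p)) * (‖f x‖ ^ (p - 1) * ‖eulerOp f x‖) := by
          rw [hsplit]
      _ = (‖x‖ ^ β) ^ (1 / q) * ‖f x‖ ^ (p - 1) * ((‖x‖ ^ β) ^ (1 / p) * ‖eulerOp f x‖) := by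
          ring
  have hu_nonneg : (0:(EuclideanSpace ℝ (Fin n)) → ℝ) ≤ᵐ[volume] u :=
    Filter.Eventually.of_forall fun x =>
      mul_nonneg (Real.rpow_nonneg (Real.rpow_nonneg (norm_nonneg _) _) _)
        (Real.rpow_nonneg (norm_nonneg _) _)
  have hv_nonneg : (0:(EuclideanSpace ℝ (Fin n)) → ℝ) ≤ᵐ[volume] v :=
    Filter.Eventually.of_forall fun x =>
      mul_nonneg (Real.rpow_nonneg (Real.rpow_nonneg (norm_nonneg _) _) _) (norm_nonneg _)
  have hu_meas : AEStronglyMeasurable u volume := by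
    rw [hudef]
    exact (((measurable_norm.pow_const β).pow_const _).mul
      (hf.continuous.norm.measurable.pow_const _)).aestronglyMeasurable
  have hv_meas : AEStronglyMeasurable v volume := by
    rw [hvdef]
    exact (((measurable_norm.pow_const β).pow_const _).mul
      hEcont.norm.measurable).aestronglyMeasurable
  have hu_cs : HasCompactSupport u := by
    refine IsCompact.of_isClosed_subset hfc (isClosed_tsupport u)
      (closure_minimal (fun x hx => ?_) (isClosed_tsupport f))
    by_contra hxf
    apply hx
    show u x = 0
    simp only [hudef]
    rw [image_eq_zero_of_notMem_tsupport hxf, norm_zero,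
      Real.zero_rpow (by linarith : p - 1 ≠ 0), mul_zero]
  have hv_cs : HasCompactSupport v := by
    refine IsCompact.of_isClosed_subset hfc (isClosed_tsupport v)
      (closure_minimal (fun x hx => ?_) (isClosed_tsupport f))
    by_contra hxf
    apply hx
    show v x = 0
    simp only [hvdef]
    rw [hEzero x hxf, norm_zero, mul_zero]
  have hWb : ∀ x ∈ tsupport f, ‖x‖ ^ β ≤ r ^ β + R ^ β := fun x hx =>
    rpow_add_bound hr0 (hKr x hx) (hKR x hx) β
  have hWb0 : (0:ℝ) ≤ r ^ β + R ^ β :=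
    add_nonneg (Real.rpow_nonneg hr0.le _) (Real.rpow_nonneg hRnn _)
  have hu_bd : ∀ x, ‖u x‖ ≤ (r ^ β + R ^ β) ^ (1 / q) * M ^ (p - 1) := by
    intro x
    rw [Real.norm_eq_abs, abs_of_nonneg (mul_nonneg
      (Real.rpow_nonneg (Real.rpow_nonneg (norm_nonneg _) _) _)
      (Real.rpow_nonneg (norm_nonneg _) _))]
    by_cases hx : x ∈ tsupport f
    · exact mul_le_mul
        (Real.rpow_le_rpow (Real.rpow_nonneg (norm_nonneg _) _) (hWb x hx) (by positivity))
        (Real.rpow_le_rpow (norm_nonneg _) (hM x) (by linarith))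
        (Real.rpow_nonneg (norm_nonneg _) _) (Real.rpow_nonneg hWb0 _)
    · have hzero : (‖x‖ ^ β) ^ (1 / q) * ‖f x‖ ^ (p - 1) = 0 := by
        rw [image_eq_zero_of_notMem_tsupport hx, norm_zero,
          Real.zero_rpow (by linarith : p - 1 ≠ 0), mul_zero]
      exact le_trans (le_of_eq hzero) (by positivity)
  have hv_bd : ∀ x, ‖v x‖ ≤ (r ^ β + R ^ β) ^ (1 / p) * M' := by
    intro x
    rw [Real.norm_eq_abs, abs_of_nonneg (mul_nonneg
      (Real.rpow_nonneg (Real.rpow_nonneg (norm_nonneg _) _) _) (norm_nonneg _))]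
    by_cases hx : x ∈ tsupport f
    · exact mul_le_mul
        (Real.rpow_le_rpow (Real.rpow_nonneg (norm_nonneg _) _) (hWb x hx) (by positivity))
        (hM' x) (norm_nonneg _) (Real.rpow_nonneg hWb0 _)
    · have hzero : (‖x‖ ^ β) ^ (1 / p) * ‖eulerOp f x‖ = 0 := by
        rw [hEzero x hx, norm_zero, mul_zero]
      exact le_trans (le_of_eq hzero) (by positivity)
  have hu_mem : MemLp u (ENNReal.ofReal q) volume :=
    hu_cs.memLp_of_bound hu_meas _ (Filter.Eventually.of_forall hu_bd)
  have hv_mem : MemLp v (ENNReal.ofReal p) volume :=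
    hv_cs.memLp_of_bound hv_meas _ (Filter.Eventually.of_forall hv_bd)
  have hHolder : (∫ x, u x * v x) ≤ A ^ (1 / q) * B ^ (1 / p) := by
    have h := integral_mul_le_Lp_mul_Lq_of_nonneg hpq.symm hu_nonneg hv_nonneg hu_mem hv_mem
    have e1 : (∫ x, u x ^ q) = A := by
      rw [hAdef]
      exact integral_congr_ae (Filter.Eventually.of_forall fun x => huq x)
    have e2 : (∫ x, v x ^ p) = B := by
      rw [hBdef]
      exact integral_congr_ae (Filter.Eventually.of_forall fun x => hvp x)
    rwa [e1, e2] at h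
  -- pulling it together
  have hIle : |(n:ℝ) + β| * A ≤ p * (A ^ (1 / q) * B ^ (1 / p)) := by
    have h1 : |(n:ℝ) + β| * A = |∫ x, D x| := by
      rw [key, abs_mul, abs_neg, abs_of_nonneg hAnn]
    have h2 : |∫ x, D x| ≤ ∫ x, |D x| := by
      simpa [Real.norm_eq_abs] using norm_integral_le_integral_norm D
    have h3 : (∫ x, |D x|) ≤ ∫ x, ‖x‖ ^ β * (p * (‖f x‖ ^ (p - 1) * ‖eulerOp f x‖)) := by
      refine integral_mono hDint.abs hImaj fun x => ?_
      simp only [hDdef]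
      rw [abs_mul, abs_of_nonneg (Real.rpow_nonneg (norm_nonneg _) _)]
      exact mul_le_mul_of_nonneg_left (hGle x) (Real.rpow_nonneg (norm_nonneg _) _)
    have h4 : (∫ x, ‖x‖ ^ β * (p * (‖f x‖ ^ (p - 1) * ‖eulerOp f x‖)))
        = p * ∫ x, u x * v x := by
      rw [← integral_const_mul]
      congr 1
      funext x
      rw [← huv x]
      ring
    have h5 : p * (∫ x, u x * v x) ≤ p * (A ^ (1 / q) * B ^ (1 / p)) :=
      mul_le_mul_of_nonneg_left hHolder hp0.le
    calc |(n:ℝ) + β| * A = |∫ x, D x| := h1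
      _ ≤ ∫ x, |D x| := h2
      _ ≤ ∫ x, ‖x‖ ^ β * (p * (‖f x‖ ^ (p - 1) * ‖eulerOp f x‖)) := h3
      _ = p * ∫ x, u x * v x := h4
      _ ≤ p * (A ^ (1 / q) * B ^ (1 / p)) := h5
  -- final algebra
  have hcabs : (0:ℝ) < |(n:ℝ) + β| := abs_pos.2 hc
  rcases eq_or_lt_of_le hAnn with hA0 | hA0
  · rw [← hA0, Real.zero_rpow (by positivity : (1:ℝ)/p ≠ 0)]
    have : (0:ℝ) ≤ B ^ (1 / p) := Real.rpow_nonneg hBnn _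
    positivity
  · have hAsplit : A = A ^ (1 / q) * A ^ (1 / p) := by
      rw [← Real.rpow_add hA0, hqp, Real.rpow_one]
    have hAq : (0:ℝ) < A ^ (1 / q) := Real.rpow_pos_of_pos hA0 _
    have step : A ^ (1 / q) * (|(n:ℝ) + β| * A ^ (1 / p))
        ≤ A ^ (1 / q) * (p * B ^ (1 / p)) := by
      have h2 : |(n:ℝ) + β| * (A ^ (1 / q) * A ^ (1 / p))
          ≤ p * (A ^ (1 / q) * B ^ (1 / p)) := by
        rw [← hAsplit]
        exact hIle
      calc A ^ (1 / q) * (|(n:ℝ) + β| * A ^ (1 / p))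
          = |(n:ℝ) + β| * (A ^ (1 / q) * A ^ (1 / p)) := by ring
        _ ≤ p * (A ^ (1 / q) * B ^ (1 / p)) := h2
        _ = A ^ (1 / q) * (p * B ^ (1 / p)) := by ring
    have step2 : |(n:ℝ) + β| * A ^ (1 / p) ≤ p * B ^ (1 / p) :=
      le_of_mul_le_mul_left step hAq
    rw [div_mul_eq_mul_div, le_div_iff₀ hcabs]
    calc A ^ (1 / p) * |(n:ℝ) + β| = |(n:ℝ) + β| * A ^ (1 / p) := by ring
      _ ≤ p * B ^ (1 / p) := step2

end Aux

/-- For `1 < p < ∞`, `k ∈ ℕ`, `α ∈ ℝ` with `n ≠ αp`, and `f ∈ C₀^∞(ℝⁿ \ {0})`: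
`‖|x|^{-α} f‖_{L^p} ≤ |p/(n - αp)|^k ‖|x|^{-α} E^k f‖_{L^p}`. -/
theorem euler_weighted_Lp_higher_order {n : ℕ} (p α : ℝ) (k : ℕ) (hp : 1 < p)
    (hαp : (n : ℝ) ≠ α * p) (f : EuclideanSpace ℝ (Fin n) → ℂ)
    (hf : ContDiff ℝ (⊤ : ℕ∞) f) (hfc : HasCompactSupport f)
    (hf0 : (0 : EuclideanSpace ℝ (Fin n)) ∉ tsupport f) :
    (∫ x, ‖x‖ ^ (-α * p) * ‖f x‖ ^ p) ^ (1 / p) ≤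
      |p / ((n : ℝ) - α * p)| ^ k *
        (∫ x, ‖x‖ ^ (-α * p) * ‖(eulerOp^[k] f) x‖ ^ p) ^ (1 / p) := by
  induction k generalizing f with
  | zero => simp
  | succ k ih =>
    have hp0 : (0:ℝ) < p := by linarith
    have hc : (n : ℝ) + (-α * p) ≠ 0 := by
      intro h
      exact hαp (by linarith)
    have habs : |p / ((n : ℝ) - α * p)| = p / |(n:ℝ) + (-α * p)| := by
      rw [abs_div, abs_of_pos hp0]
      congr 2
      ring
    have h1 := base_ineq p (-α * p) hp hc f hf hfc hf0
    have h2 := ih (eulerOp f) (eulerOp_contDiff hf) (hasCompactSupport_eulerOp hfc)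
      (fun h => hf0 (tsupport_eulerOp_subset h))
    have hnn : (0:ℝ) ≤ p / |(n:ℝ) + (-α * p)| :=
      div_nonneg hp0.le (abs_nonneg _)
    calc (∫ x, ‖x‖ ^ (-α * p) * ‖f x‖ ^ p) ^ (1 / p)
        ≤ (p / |(n:ℝ) + (-α * p)|) *
            (∫ x, ‖x‖ ^ (-α * p) * ‖eulerOp f x‖ ^ p) ^ (1 / p) := h1
      _ ≤ (p / |(n:ℝ) + (-α * p)|) * (|p / ((n : ℝ) - α * p)| ^ k *
            (∫ x, ‖x‖ ^ (-α * p) * ‖(eulerOp^[k] (eulerOp f)) x‖ ^ p) ^ (1 / p)) :=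
          mul_le_mul_of_nonneg_left h2 hnn
      _ = |p / ((n : ℝ) - α * p)| ^ (k + 1) *
            (∫ x, ‖x‖ ^ (-α * p) * ‖(eulerOp^[k + 1] f) x‖ ^ p) ^ (1 / p) := by
          have hit : eulerOp^[k + 1] f = eulerOp^[k] (eulerOp f) :=
            Function.iterate_succ_apply eulerOp k f
          rw [hit, habs, pow_succ]
          ring
end

section
/- Let α ∈ ℝ and k ∈ ℕ. For every complex-valued f ∈ C_0^∞(ℝⁿ \ {0}), the exact remainder formula ‖ |x|^{−α} E^k f ‖²_{L²} = ((n−2α)/2)^{2k} ‖ |x|^{−α} f ‖²_{L²} + Σ_{m=1}^{k} ((n−2α)/2)^{2k−2m} ‖ |x|^{−α} E^m f + ((n−2α)/2) |x|^{−α} E^{m−1} f ‖²_{L²} holds. -/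
open MeasureTheory Real

section EWRaux

variable {n : ℕ}

lemma eulerOp_tsupport (f : EuclideanSpace ℝ (Fin n) → ℂ) :
    tsupport (eulerOp f) ⊆ tsupport f := by
  refine closure_minimal (fun x hx => ?_) isClosed_closure
  have : fderiv ℝ f x ≠ 0 := by
    intro h; exact hx (by simp [eulerOp, h])
  exact support_fderiv_subset ℝ this

lemma eulerOp_iter_contDiff {f : EuclideanSpace ℝ (Fin n) → ℂ} (hf : ContDiff ℝ (⊤ : ℕ∞) f) (m : ℕ) :
    ContDiff ℝ (⊤ : ℕ∞) (eulerOp^[m] f) := by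
  induction m with
  | zero => exact hf
  | succ m ih => rw [Function.iterate_succ_apply']; exact eulerOp_contDiff ih

lemma eulerOp_iter_tsupport (f : EuclideanSpace ℝ (Fin n) → ℂ) (m : ℕ) :
    tsupport (eulerOp^[m] f) ⊆ tsupport f := by
  induction m with
  | zero => exact subset_rfl
  | succ m ih => rw [Function.iterate_succ_apply']; exact (eulerOp_tsupport _).trans ih

lemma EWR_hasFDerivAt_norm_rpow {x : EuclideanSpace ℝ (Fin n)} (hx : x ≠ 0) (p : ℝ) :
    HasFDerivAt (fun y : EuclideanSpace ℝ (Fin n) => ‖y‖ ^ p)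
      ((p * ‖x‖ ^ (p - 2)) • (innerSL ℝ x)) x := by
  have hnorm : (0:ℝ) < ‖x‖ := norm_pos_iff.2 hx
  have h2 : (‖x‖ ^ 2 : ℝ) ≠ 0 := by positivity
  have outer : HasDerivAt (fun t : ℝ => t ^ (p/2)) ((p/2) * (‖x‖^2) ^ (p/2 - 1)) (‖x‖^2) :=
    Real.hasDerivAt_rpow_const (Or.inl h2)
  have inner : HasFDerivAt (fun y : EuclideanSpace ℝ (Fin n) => ‖y‖ ^ 2)
      (2 • (innerSL ℝ x)) x := (hasStrictFDerivAt_norm_sq x).hasFDerivAt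
  have comp := outer.comp_hasFDerivAt x inner
  have heq : (fun y : EuclideanSpace ℝ (Fin n) => (‖y‖ ^ 2 : ℝ) ^ (p/2))
      = fun y => ‖y‖ ^ p := by
    funext y
    rw [← Real.rpow_natCast ‖y‖ 2, ← Real.rpow_mul (norm_nonneg y)]
    congr 1; push_cast; ring
  have h3 : ((‖x‖^2:ℝ)) ^ (p/2 - 1) = ‖x‖ ^ (p - 2) := by
    rw [← Real.rpow_natCast ‖x‖ 2, ← Real.rpow_mul (norm_nonneg x)]
    congr 1; push_cast; ring
  rw [show ((fun t : ℝ => t ^ (p/2)) ∘ fun y : EuclideanSpace ℝ (Fin n) => ‖y‖ ^ 2)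
      = fun y => (‖y‖^2:ℝ) ^ (p/2) from rfl, heq, h3] at comp
  refine comp.congr_fderiv ?_
  ext v
  simp only [ContinuousLinearMap.smul_apply, smul_eq_mul, ContinuousLinearMap.smul_apply]
  push_cast
  simp
  ring

noncomputable def EWRchi (c0 : ℝ) (x : EuclideanSpace ℝ (Fin n)) : ℝ :=
  Real.smoothTransition ((‖x‖^2 - c0)/c0)

lemma EWRchi_contDiff {c0 : ℝ} : ContDiff ℝ ((⊤:ℕ∞)) (EWRchi (n := n) c0) := by
  have h1 : ContDiff ℝ ((⊤:ℕ∞)) (fun x : EuclideanSpace ℝ (Fin n) => (‖x‖^2 - c0)/c0) :=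
    ((contDiff_norm_sq ℝ).sub contDiff_const).div_const _
  exact Real.smoothTransition.contDiff.comp h1

lemma EWRchi_zero {c0 : ℝ} {x : EuclideanSpace ℝ (Fin n)} (h : ‖x‖^2 ≤ c0) :
    EWRchi c0 x = 0 :=
  Real.smoothTransition.zero_of_nonpos (div_nonpos_of_nonpos_of_nonneg (by linarith)
    (by nlinarith [sq_nonneg ‖x‖, h]))

lemma EWRchi_one {c0 : ℝ} (hc0 : 0 < c0) {x : EuclideanSpace ℝ (Fin n)} (h : 2*c0 ≤ ‖x‖^2) :
    EWRchi c0 x = 1 :=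
  Real.smoothTransition.one_of_one_le (by rw [le_div_iff₀ hc0]; linarith)

lemma EWRW_contDiff {c0 : ℝ} (hc0 : 0 < c0) (p : ℝ) :
    ContDiff ℝ ((⊤:ℕ∞)) (fun x : EuclideanSpace ℝ (Fin n) => EWRchi c0 x * ‖x‖ ^ p) := by
  rw [contDiff_iff_contDiffAt]
  intro x
  rcases lt_or_ge (‖x‖^2) c0 with h | h
  · have : (fun y : EuclideanSpace ℝ (Fin n) => EWRchi c0 y * ‖y‖ ^ p) =ᶠ[nhds x] fun _ => 0 := by
      have hopen : IsOpen {y : EuclideanSpace ℝ (Fin n) | ‖y‖^2 < c0} :=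
        isOpen_lt (by fun_prop) continuous_const
    
      filter_upwards [hopen.mem_nhds h] with y hy
      rw [EWRchi_zero (le_of_lt hy), zero_mul]
    exact (contDiffAt_const (c := (0:ℝ))).congr_of_eventuallyEq this
  · have hx : x ≠ 0 := by
      intro h0; rw [h0] at h; simp at h; nlinarith
    have h1 : ContDiffAt ℝ ((⊤:ℕ∞)) (fun y : EuclideanSpace ℝ (Fin n) => ‖y‖ ^ p) x := by
      have := (Real.contDiffAt_rpow_const_of_ne (x := ‖x‖) (p := p) (n := ((⊤:ℕ∞) : WithTop ℕ∞))
        (ne_of_gt (norm_pos_iff.2 hx)))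
      exact this.comp x (contDiffAt_norm ℝ hx)
    exact (EWRchi_contDiff.contDiffAt).mul h1

lemma EWRW_eventuallyEq {c0 : ℝ} (hc0 : 0 < c0) (p : ℝ) {x : EuclideanSpace ℝ (Fin n)}
    (hx : 2*c0 < ‖x‖^2) :
    (fun y : EuclideanSpace ℝ (Fin n) => EWRchi c0 y * ‖y‖ ^ p) =ᶠ[nhds x]
      (fun y => ‖y‖ ^ p) := by
  have hopen : IsOpen {y : EuclideanSpace ℝ (Fin n) | 2*c0 < ‖y‖^2} :=
    isOpen_lt continuous_const (by fun_prop)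
  filter_upwards [hopen.mem_nhds hx] with y hy
  rw [EWRchi_one hc0 (le_of_lt hy), one_mul]

lemma EWR_norm_pos {c0 : ℝ} (hc0 : 0 < c0) {x : EuclideanSpace ℝ (Fin n)}
    (hx : 2*c0 < ‖x‖^2) : x ≠ 0 := by
  intro h0; rw [h0] at hx; simp at hx; nlinarith

lemma EWR_divergence {c0 : ℝ} (hc0 : 0 < c0) (p : ℝ) {x : EuclideanSpace ℝ (Fin n)}
    (hx : 2*c0 < ‖x‖^2) :
    ∑ i : Fin n, fderiv ℝ (fun y : EuclideanSpace ℝ (Fin n) =>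
        (EWRchi c0 y * ‖y‖ ^ p) * y i) x (EuclideanSpace.single i 1)
      = ((n : ℝ) + p) * (EWRchi c0 x * ‖x‖ ^ p) := by
  have hx0 : x ≠ 0 := EWR_norm_pos hc0 hx
  have hxn : (0:ℝ) < ‖x‖ := norm_pos_iff.2 hx0
  have key : ∀ i : Fin n, fderiv ℝ (fun y : EuclideanSpace ℝ (Fin n) =>
      (EWRchi c0 y * ‖y‖ ^ p) * y i) x (EuclideanSpace.single i 1)
      = ‖x‖ ^ p + x i * (p * ‖x‖ ^ (p-2) * x i) := by
    intro i
    have hev : (fun y : EuclideanSpace ℝ (Fin n) => (EWRchi c0 y * ‖y‖ ^ p) * y i)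
        =ᶠ[nhds x] (fun y => ‖y‖ ^ p * y i) := by
      filter_upwards [EWRW_eventuallyEq hc0 p hx] with y hy
      rw [hy]
    have hD : HasFDerivAt (fun y : EuclideanSpace ℝ (Fin n) => ‖y‖ ^ p * y i)
        ((‖x‖ ^ p) • (EuclideanSpace.proj i) +
          (x i) • ((p * ‖x‖ ^ (p - 2)) • (innerSL ℝ x)))
        x := by
      have h1 := EWR_hasFDerivAt_norm_rpow hx0 p
      have h2 : HasFDerivAt (fun y : EuclideanSpace ℝ (Fin n) => y i)
          (EuclideanSpace.proj (𝕜 := ℝ) i) x := by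
        exact (EuclideanSpace.proj (𝕜 := ℝ) (i : Fin n)).hasFDerivAt
      exact h1.mul h2
    rw [hev.fderiv_eq, hD.fderiv]
    simp [EuclideanSpace.inner_single_right, real_inner_comm,
      PiLp.proj_apply, EuclideanSpace.single_apply]
    try ring
  rw [Finset.sum_congr rfl (fun i _ => key i)]
  rw [Finset.sum_add_distrib, Finset.sum_const, Finset.card_univ, Fintype.card_fin]
  have hsum : ∑ i : Fin n, x i * (p * ‖x‖ ^ (p-2) * x i) = p * ‖x‖ ^ (p-2) * ‖x‖^2 := by
    rw [← real_inner_self_eq_norm_sq]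
    rw [PiLp.inner_apply]
    simp [RCLike.inner_apply]
    rw [Finset.mul_sum]
    congr 1; funext i; ring
  rw [hsum, EWRchi_one hc0 (le_of_lt hx), one_mul]
  have : ‖x‖ ^ (p-2) * ‖x‖^2 = ‖x‖ ^ p := by
    rw [← Real.rpow_natCast ‖x‖ 2, ← Real.rpow_add hxn]
    norm_num
  rw [nsmul_eq_mul, mul_assoc p, this]
  ring

lemma EWR_ibp {c0 : ℝ} (hc0 : 0 < c0) (p : ℝ) (h : EuclideanSpace ℝ (Fin n) → ℝ)
    (hh : ContDiff ℝ ((⊤:ℕ∞)) h) (hhc : HasCompactSupport h)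
    (hsupp : ∀ x ∈ tsupport h, 2*c0 < ‖x‖^2) :
    ∫ x, (EWRchi c0 x * ‖x‖ ^ p) * fderiv ℝ h x x
      = -((n:ℝ) + p) * ∫ x, (EWRchi c0 x * ‖x‖ ^ p) * h x := by
  set W : EuclideanSpace ℝ (Fin n) → ℝ := fun x => EWRchi c0 x * ‖x‖ ^ p with hWdef
  have hW : ContDiff ℝ ((⊤:ℕ∞)) W := EWRW_contDiff hc0 p
  have hWc : Continuous W := hW.continuous
  set F : Fin n → EuclideanSpace ℝ (Fin n) → ℝ := fun i x => W x * x i with hFdef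
  have hFi : ∀ i, ContDiff ℝ ((⊤:ℕ∞)) (F i) := fun i =>
    hW.mul ((EuclideanSpace.proj (𝕜 := ℝ) (i : Fin n)).contDiff)
  have hDh : Continuous (fderiv ℝ h) :=
    (hh.fderiv_right (m := ((⊤:ℕ∞))) (by exact_mod_cast le_rfl)).continuous
  have hDhv : ∀ v, Continuous (fun x => fderiv ℝ h x v) := fun v =>
    hDh.clm_apply continuous_const
  have hsupDh : ∀ (v : EuclideanSpace ℝ (Fin n)) (x), fderiv ℝ h x v ≠ 0 → x ∈ tsupport h := by
    intro v x hx
    exact support_fderiv_subset ℝ (fun h0 => hx (by rw [h0]; rfl))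
  -- pointwise expansion
  have hpt : ∀ x : EuclideanSpace ℝ (Fin n), W x * fderiv ℝ h x x
      = ∑ i, F i x * fderiv ℝ h x (EuclideanSpace.single i 1) := by
    intro x
    have hxsum : (x : EuclideanSpace ℝ (Fin n))
        = ∑ i, x i • EuclideanSpace.single i (1:ℝ) := by
      ext j
      rw [WithLp.ofLp_sum, Fintype.sum_apply]
      simp [EuclideanSpace.single_apply]
    calc W x * fderiv ℝ h x x
        = W x * fderiv ℝ h x (∑ i, x i • EuclideanSpace.single i (1:ℝ)) := by
          rw [← hxsum]
      _ = ∑ i, F i x * fderiv ℝ h x (EuclideanSpace.single i 1) := by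
          rw [map_sum, Finset.mul_sum]
          congr 1; funext i
          rw [(fderiv ℝ h x).map_smul, smul_eq_mul]
          simp only [hFdef]; ring
  rw [integral_congr_ae (Filter.Eventually.of_forall hpt)]
  have hint_term : ∀ i : Fin n, Integrable
      (fun x => F i x * fderiv ℝ h x (EuclideanSpace.single i 1)) := by
    intro i
    refine Continuous.integrable_of_hasCompactSupport
      (((hFi i).continuous).mul (hDhv _)) (hhc.mono' ?_)
    intro x hx
    simp only [Function.mem_support, mul_ne_zero_iff] at hx
    exact hsupDh _ x hx.2
  rw [integral_finset_sum _ (fun i _ => hint_term i)]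
  -- per-coordinate integration by parts
  have hibp : ∀ i : Fin n,
      ∫ x, F i x * fderiv ℝ h x (EuclideanSpace.single i 1)
        = - ∫ x, fderiv ℝ (F i) x (EuclideanSpace.single i 1) * h x := by
    intro i
    refine integral_mul_fderiv_eq_neg_fderiv_mul_of_integrable ?_ ?_ ?_
      (fun x _ => (hFi i).differentiable (by simp) x)
      (fun x _ => hh.differentiable (by simp) x)
    · refine Continuous.integrable_of_hasCompactSupport
        ((((hFi i).fderiv_right (m := ((⊤:ℕ∞))) (by exact_mod_cast le_rfl)).continuous.clm_apply
          continuous_const).mul hh.continuous) (hhc.mono' ?_)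
      intro x hx
      simp only [Function.mem_support, mul_ne_zero_iff] at hx
      exact subset_tsupport h hx.2
    · exact hint_term i
    · refine Continuous.integrable_of_hasCompactSupport
        (((hFi i).continuous).mul hh.continuous) (hhc.mono' ?_)
      intro x hx
      simp only [Function.mem_support, mul_ne_zero_iff] at hx
      exact subset_tsupport h hx.2
  have hDFint : ∀ i : Fin n, Integrable
      (fun x => fderiv ℝ (F i) x (EuclideanSpace.single i 1) * h x) := by
    intro i
    refine Continuous.integrable_of_hasCompactSupport
      ((((hFi i).fderiv_right (m := ((⊤:ℕ∞))) (by exact_mod_cast le_rfl)).continuous.clm_apply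
        continuous_const).mul hh.continuous) (hhc.mono' ?_)
    intro x hx
    simp only [Function.mem_support, mul_ne_zero_iff] at hx
    exact subset_tsupport h hx.2
  calc ∑ i, ∫ x, F i x * fderiv ℝ h x (EuclideanSpace.single i 1)
      = ∑ i, - ∫ x, fderiv ℝ (F i) x (EuclideanSpace.single i 1) * h x :=
        Finset.sum_congr rfl (fun i _ => hibp i)
    _ = - ∫ x, ∑ i, fderiv ℝ (F i) x (EuclideanSpace.single i 1) * h x := by
        rw [integral_finset_sum _ (fun i _ => hDFint i), Finset.sum_neg_distrib]
    _ = -((n:ℝ) + p) * ∫ x, W x * h x := by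
        rw [neg_mul, ← integral_const_mul]
        congr 1
        apply integral_congr_ae
        apply Filter.Eventually.of_forall
        intro x
        by_cases hx : h x = 0
        · simp [hx]
        · have hd := EWR_divergence hc0 p (hsupp x (subset_tsupport h hx))
          beta_reduce
          rw [← Finset.sum_mul]
          rw [show (∑ i, fderiv ℝ (F i) x (EuclideanSpace.single i 1))
            = ((n:ℝ) + p) * (EWRchi c0 x * ‖x‖ ^ p) from hd]
          simp only [hWdef]
          ring

lemma EWR_normSq_contDiff {g : EuclideanSpace ℝ (Fin n) → ℂ} (hg : ContDiff ℝ ((⊤:ℕ∞)) g) :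
    ContDiff ℝ ((⊤:ℕ∞)) (fun x => ‖g x‖^2) := by
  have hu : ContDiff ℝ ((⊤:ℕ∞)) (fun x => (g x).re) := Complex.reCLM.contDiff.comp hg
  have hv : ContDiff ℝ ((⊤:ℕ∞)) (fun x => (g x).im) := Complex.imCLM.contDiff.comp hg
  have : (fun x => ‖g x‖^2) = fun x => (g x).re * (g x).re + (g x).im * (g x).im := by
    funext x
    rw [Complex.sq_norm, Complex.normSq_apply]
  rw [this]
  exact (hu.mul hu).add (hv.mul hv)

lemma EWR_fderiv_normSq {g : EuclideanSpace ℝ (Fin n) → ℂ} (hg : ContDiff ℝ ((⊤:ℕ∞)) g)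
    (x : EuclideanSpace ℝ (Fin n)) :
    fderiv ℝ (fun x => ‖g x‖^2) x x = 2 * ((eulerOp g x) * (starRingEnd ℂ) (g x)).re := by
  have hgd : HasFDerivAt g (fderiv ℝ g x) x :=
    (hg.differentiable (by simp) x).hasFDerivAt
  have hu : HasFDerivAt (fun y => (g y).re) (Complex.reCLM.comp (fderiv ℝ g x)) x :=
    Complex.reCLM.hasFDerivAt.comp x hgd
  have hv : HasFDerivAt (fun y => (g y).im) (Complex.imCLM.comp (fderiv ℝ g x)) x :=
    Complex.imCLM.hasFDerivAt.comp x hgd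
  have hh := (hu.mul hu).add (hv.mul hv)
  have heq : (fun y => ‖g y‖^2) = fun y => (g y).re * (g y).re + (g y).im * (g y).im := by
    funext y
    rw [Complex.sq_norm, Complex.normSq_apply]
  rw [heq, HasFDerivAt.fderiv (f := fun y => (g y).re * (g y).re + (g y).im * (g y).im) hh]
  simp only [ContinuousLinearMap.add_apply, ContinuousLinearMap.smul_apply,
    ContinuousLinearMap.coe_comp', Function.comp_apply, Complex.reCLM_apply,
    Complex.imCLM_apply, smul_eq_mul]
  simp only [eulerOp, Complex.mul_re, Complex.conj_re, Complex.conj_im]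
  ring

lemma EWR_expand (c : ℝ) (a b : ℂ) :
    ‖a + (c:ℂ)*b‖^2 = ‖a‖^2 + 2*c*((a * (starRingEnd ℂ) b).re) + c^2*‖b‖^2 := by
  rw [Complex.sq_norm, Complex.normSq_add,
    Complex.sq_norm, Complex.sq_norm]
  rw [Complex.normSq_mul, Complex.normSq_ofReal, map_mul, Complex.conj_ofReal]
  have : a * ((c:ℂ) * (starRingEnd ℂ) b) = (c:ℂ) * (a * (starRingEnd ℂ) b) := by ring
  rw [this]
  simp [Complex.mul_re]
  ring

lemma EWR_step {c0 : ℝ} (hc0 : 0 < c0) (α : ℝ) (g : EuclideanSpace ℝ (Fin n) → ℂ)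
    (hg : ContDiff ℝ ((⊤:ℕ∞)) g) (hgc : HasCompactSupport g)
    (hsupp : ∀ x ∈ tsupport g, 2*c0 < ‖x‖^2) :
    ∫ x, (EWRchi c0 x * ‖x‖ ^ (-(2:ℝ)*α)) * ‖eulerOp g x‖^2
      = (((n:ℝ) - 2*α)/2)^2 * (∫ x, (EWRchi c0 x * ‖x‖ ^ (-(2:ℝ)*α)) * ‖g x‖^2)
        + ∫ x, (EWRchi c0 x * ‖x‖ ^ (-(2:ℝ)*α)) *
            ‖eulerOp g x + ((((n:ℝ) - 2*α)/2 : ℝ) : ℂ) * g x‖^2 := by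
  set p : ℝ := -(2:ℝ)*α with hp
  set c : ℝ := ((n:ℝ) - 2*α)/2 with hc
  have hWcont : Continuous (fun x : EuclideanSpace ℝ (Fin n) => EWRchi c0 x * ‖x‖ ^ p) :=
    (EWRW_contDiff hc0 p).continuous
  have hgcont : Continuous g := hg.continuous
  have hEg : Continuous (eulerOp g) :=
    ((hg.fderiv_right (m := ((⊤:ℕ∞))) (by exact_mod_cast le_rfl)).continuous).clm_apply
      continuous_id
  have hsupEg : ∀ x, eulerOp g x ≠ 0 → x ∈ tsupport g := by
    intro x hx
    apply support_fderiv_subset ℝ (f := g)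
    intro h0
    exact hx (by simp [eulerOp, h0])
  have hsup_h : ∀ x, ‖g x‖^2 ≠ 0 → x ∈ tsupport g := by
    intro x hx
    apply subset_tsupport
    intro h0
    exact hx (by simp [h0])
  have hhc : HasCompactSupport (fun x => ‖g x‖^2 : EuclideanSpace ℝ (Fin n) → ℝ) :=
    hgc.mono' (fun x hx => hsup_h x hx)
  have key : ∫ x, (EWRchi c0 x * ‖x‖ ^ p) * ((eulerOp g x) * (starRingEnd ℂ) (g x)).re
      = -c * ∫ x, (EWRchi c0 x * ‖x‖ ^ p) * ‖g x‖^2 := by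
    have h1 := EWR_ibp hc0 p (fun x => ‖g x‖^2) (EWR_normSq_contDiff hg) hhc
      (fun x hx => hsupp x (closure_minimal hsup_h (isClosed_tsupport g) hx))
    have h2 : ∀ x, (EWRchi c0 x * ‖x‖ ^ p) *
          fderiv ℝ (fun x => ‖g x‖^2 : EuclideanSpace ℝ (Fin n) → ℝ) x x
        = 2 * ((EWRchi c0 x * ‖x‖ ^ p) * ((eulerOp g x) * (starRingEnd ℂ) (g x)).re) := by
      intro x
      rw [EWR_fderiv_normSq hg x]
      ring
    rw [integral_congr_ae (Filter.Eventually.of_forall h2), integral_const_mul] at h1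
    have hnp : -((n:ℝ) + p) = -2*c := by rw [hp, hc]; ring
    rw [hnp] at h1
    linarith
  have hint : ∀ (u : EuclideanSpace ℝ (Fin n) → ℝ), Continuous u →
      (∀ x, u x ≠ 0 → x ∈ tsupport g) →
      Integrable (fun x => (EWRchi c0 x * ‖x‖ ^ p) * u x) := by
    intro u hu hsup
    refine Continuous.integrable_of_hasCompactSupport (hWcont.mul hu) (hgc.mono' ?_)
    intro x hx
    simp only [Function.mem_support, mul_ne_zero_iff] at hx
    exact hsup x hx.2
  have I1 : Integrable (fun x => (EWRchi c0 x * ‖x‖ ^ p) * ‖eulerOp g x‖^2) :=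
    hint _ (by fun_prop) (fun x hx => hsupEg x (by intro h0; exact hx (by simp [h0])))
  have I3 : Integrable (fun x => (EWRchi c0 x * ‖x‖ ^ p) * ‖g x‖^2) :=
    hint _ (by fun_prop) hsup_h
  have I2 : Integrable
      (fun x => (EWRchi c0 x * ‖x‖ ^ p) * ((eulerOp g x) * (starRingEnd ℂ) (g x)).re) :=
    hint _ (by fun_prop) (fun x hx => hsupEg x (by intro h0; exact hx (by simp [h0])))
  have hexp : ∀ x, (EWRchi c0 x * ‖x‖ ^ p) * ‖eulerOp g x + (c:ℂ) * g x‖^2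
      = ((EWRchi c0 x * ‖x‖ ^ p) * ‖eulerOp g x‖^2
          + (2*c) * ((EWRchi c0 x * ‖x‖ ^ p) * ((eulerOp g x) * (starRingEnd ℂ) (g x)).re))
        + c^2 * ((EWRchi c0 x * ‖x‖ ^ p) * ‖g x‖^2) := by
    intro x
    rw [EWR_expand c (eulerOp g x) (g x)]
    ring
  have hsplit : ∫ x, (EWRchi c0 x * ‖x‖ ^ p) * ‖eulerOp g x + (c:ℂ) * g x‖^2
      = ((∫ x, (EWRchi c0 x * ‖x‖ ^ p) * ‖eulerOp g x‖^2)
          + (2*c) * (∫ x, (EWRchi c0 x * ‖x‖ ^ p) * ((eulerOp g x) * (starRingEnd ℂ) (g x)).re))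
        + c^2 * (∫ x, (EWRchi c0 x * ‖x‖ ^ p) * ‖g x‖^2) := by
    rw [integral_congr_ae (Filter.Eventually.of_forall hexp)]
    have e1 := integral_add (μ := volume) (I1.add (I2.const_mul (2*c))) (I3.const_mul (c^2))
    have e2 := integral_add (μ := volume) I1 (I2.const_mul (2*c))
    have e3 := integral_const_mul (μ := volume) (2*c)
      (fun x => (EWRchi c0 x * ‖x‖ ^ p) * ((eulerOp g x) * (starRingEnd ℂ) (g x)).re)
    have e4 := integral_const_mul (μ := volume) (c^2)
      (fun x => (EWRchi c0 x * ‖x‖ ^ p) * ‖g x‖^2)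
    calc ∫ x, (((EWRchi c0 x * ‖x‖ ^ p) * ‖eulerOp g x‖^2
          + (2*c) * ((EWRchi c0 x * ‖x‖ ^ p) * ((eulerOp g x) * (starRingEnd ℂ) (g x)).re))
        + c^2 * ((EWRchi c0 x * ‖x‖ ^ p) * ‖g x‖^2))
        = (∫ x, ((EWRchi c0 x * ‖x‖ ^ p) * ‖eulerOp g x‖^2
            + (2*c) * ((EWRchi c0 x * ‖x‖ ^ p) * ((eulerOp g x) * (starRingEnd ℂ) (g x)).re)))
          + ∫ x, c^2 * ((EWRchi c0 x * ‖x‖ ^ p) * ‖g x‖^2) := e1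
      _ = ((∫ x, (EWRchi c0 x * ‖x‖ ^ p) * ‖eulerOp g x‖^2)
            + ∫ x, (2*c) * ((EWRchi c0 x * ‖x‖ ^ p) * ((eulerOp g x) * (starRingEnd ℂ) (g x)).re))
          + ∫ x, c^2 * ((EWRchi c0 x * ‖x‖ ^ p) * ‖g x‖^2) := by rw [e2]
      _ = _ := by rw [e3, e4]
  rw [hsplit, key]
  obtain ⟨A, hA⟩ : ∃ A, (∫ x, (EWRchi c0 x * ‖x‖ ^ p) * ‖eulerOp g x‖^2) = A := ⟨_, rfl⟩
  obtain ⟨B, hB⟩ : ∃ B, (∫ x, (EWRchi c0 x * ‖x‖ ^ p) * ‖g x‖^2) = B := ⟨_, rfl⟩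
  rw [hA, hB]
  ring

end EWRaux

/-- Exact higher-order remainder formula: for `α ∈ ℝ`, `k ∈ ℕ` and
`f ∈ C₀^∞(ℝⁿ \ {0})`,
`‖|x|^{-α}E^k f‖² = ((n-2α)/2)^{2k} ‖|x|^{-α}f‖²
  + Σ_{m=1}^k ((n-2α)/2)^{2k-2m} ‖|x|^{-α}E^m f + ((n-2α)/2)|x|^{-α}E^{m-1}f‖²`. -/
theorem euler_weighted_L2_higher_remainder {n : ℕ} (α : ℝ) (k : ℕ)
    (f : EuclideanSpace ℝ (Fin n) → ℂ)
    (hf : ContDiff ℝ (⊤ : ℕ∞) f) (hfc : HasCompactSupport f)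
    (hf0 : (0 : EuclideanSpace ℝ (Fin n)) ∉ tsupport f) :
    (∫ x, ‖x‖ ^ (-(2 : ℝ) * α) * ‖(eulerOp^[k] f) x‖ ^ 2) =
      (((n : ℝ) - 2 * α) / 2) ^ (2 * k) *
        (∫ x, ‖x‖ ^ (-(2 : ℝ) * α) * ‖f x‖ ^ 2) +
      ∑ m ∈ Finset.Icc 1 k, (((n : ℝ) - 2 * α) / 2) ^ (2 * k - 2 * m) *
        (∫ x, ‖x‖ ^ (-(2 : ℝ) * α) *
          ‖(eulerOp^[m] f) x +
            (((((n : ℝ) - 2 * α) / 2) : ℝ) : ℂ) * (eulerOp^[m - 1] f) x‖ ^ 2) := by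
  obtain ⟨ε, hε, hball⟩ :=
    Metric.isOpen_iff.1 ((isClosed_tsupport f).isOpen_compl) 0 hf0
  set c0 : ℝ := ε^2/4 with hc0def
  have hc0 : 0 < c0 := by positivity
  have hK : ∀ x ∈ tsupport f, 2*c0 < ‖x‖^2 := by
    intro x hx
    have hεx : ε ≤ ‖x‖ := by
      by_contra hlt
      push_neg at hlt
      exact (hball (by simpa [Metric.mem_ball, dist_zero_right] using hlt)) hx
    have : 0 < ε := hε
    rw [hc0def]
    nlinarith
  have hsm : ∀ m, ContDiff ℝ ((⊤:ℕ∞)) (eulerOp^[m] f) := fun m =>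
    (eulerOp_iter_contDiff hf m).of_le (by simp)
  have hts : ∀ m, tsupport (eulerOp^[m] f) ⊆ tsupport f := eulerOp_iter_tsupport f
  have hcs : ∀ m, HasCompactSupport (eulerOp^[m] f) := fun m =>
    IsCompact.of_isClosed_subset hfc (isClosed_tsupport _) (hts m)
  have hconv : ∀ (u : EuclideanSpace ℝ (Fin n) → ℝ), (∀ x, u x ≠ 0 → x ∈ tsupport f) →
      (∫ x, ‖x‖ ^ (-(2:ℝ)*α) * u x) = ∫ x, (EWRchi c0 x * ‖x‖ ^ (-(2:ℝ)*α)) * u x := by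
    intro u hu
    apply integral_congr_ae
    apply Filter.Eventually.of_forall
    intro x
    beta_reduce
    by_cases hx : u x = 0
    · rw [hx, mul_zero, mul_zero]
    · rw [EWRchi_one hc0 (le_of_lt (hK x (hu x hx)))]
      ring
  have main : ∀ K : ℕ,
      (∫ x, (EWRchi c0 x * ‖x‖ ^ (-(2:ℝ)*α)) * ‖(eulerOp^[K] f) x‖^2)
      = (((n : ℝ) - 2 * α) / 2) ^ (2 * K) *
          (∫ x, (EWRchi c0 x * ‖x‖ ^ (-(2:ℝ)*α)) * ‖f x‖ ^ 2) +
        ∑ m ∈ Finset.Icc 1 K, (((n : ℝ) - 2 * α) / 2) ^ (2 * K - 2 * m) *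
          (∫ x, (EWRchi c0 x * ‖x‖ ^ (-(2:ℝ)*α)) *
            ‖(eulerOp^[m] f) x +
              (((((n : ℝ) - 2 * α) / 2) : ℝ) : ℂ) * (eulerOp^[m - 1] f) x‖ ^ 2) := by
    intro K
    induction K with
    | zero => simp
    | succ K ih =>
      rw [show eulerOp^[K+1] f = eulerOp (eulerOp^[K] f) from Function.iterate_succ_apply' _ _ _]
      rw [EWR_step hc0 α (eulerOp^[K] f) (hsm K) (hcs K) (fun x hx => hK x (hts K hx))]
      rw [ih]
      rw [Finset.sum_Icc_succ_top (by omega : 1 ≤ K+1)]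
      simp only [Function.iterate_succ_apply', Nat.add_sub_cancel, Nat.sub_self, pow_zero, one_mul]
      have hexp : ∀ m ∈ Finset.Icc 1 K,
          (((n : ℝ) - 2 * α) / 2) ^ (2 * (K+1) - 2 * m) *
            (∫ x, (EWRchi c0 x * ‖x‖ ^ (-(2:ℝ)*α)) *
              ‖(eulerOp^[m] f) x +
                (((((n : ℝ) - 2 * α) / 2) : ℝ) : ℂ) * (eulerOp^[m - 1] f) x‖ ^ 2)
          = (((n : ℝ) - 2 * α) / 2) ^ 2 * ((((n : ℝ) - 2 * α) / 2) ^ (2 * K - 2 * m) *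
            (∫ x, (EWRchi c0 x * ‖x‖ ^ (-(2:ℝ)*α)) *
              ‖(eulerOp^[m] f) x +
                (((((n : ℝ) - 2 * α) / 2) : ℝ) : ℂ) * (eulerOp^[m - 1] f) x‖ ^ 2)) := by
        intro m hm
        have hmK : m ≤ K := (Finset.mem_Icc.1 hm).2
        rw [show 2 * (K+1) - 2 * m = 2 + (2 * K - 2 * m) from by omega, pow_add, mul_assoc]
      rw [Finset.sum_congr rfl hexp, ← Finset.mul_sum]
      rw [show 2 * (K+1) = 2 * K + 2 from by omega, pow_add]
      ring
  -- rewrite all integrals in χ-form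
  rw [hconv _ (fun x hx => hts k (subset_tsupport _ (fun h0 => hx (by simp [h0]))))]
  rw [hconv _ (fun x hx => subset_tsupport _ (fun h0 => hx (by simp [h0])))]
  have hsum_rw : ∀ m ∈ Finset.Icc 1 k,
      (((n : ℝ) - 2 * α) / 2) ^ (2 * k - 2 * m) *
        (∫ x, ‖x‖ ^ (-(2 : ℝ) * α) *
          ‖(eulerOp^[m] f) x +
            (((((n : ℝ) - 2 * α) / 2) : ℝ) : ℂ) * (eulerOp^[m - 1] f) x‖ ^ 2)
      = (((n : ℝ) - 2 * α) / 2) ^ (2 * k - 2 * m) *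
        (∫ x, (EWRchi c0 x * ‖x‖ ^ (-(2 : ℝ) * α)) *
          ‖(eulerOp^[m] f) x +
            (((((n : ℝ) - 2 * α) / 2) : ℝ) : ℂ) * (eulerOp^[m - 1] f) x‖ ^ 2) := by
    intro m _
    congr 1
    apply hconv
    intro x hx
    have : (eulerOp^[m] f) x ≠ 0 ∨ (eulerOp^[m-1] f) x ≠ 0 := by
      by_contra hc
      push_neg at hc
      exact hx (by simp [hc.1, hc.2])
    rcases this with h | h
    · exact hts m (subset_tsupport _ h)
    · exact hts (m-1) (subset_tsupport _ h)
  rw [Finset.sum_congr rfl hsum_rw]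
  exact main k
end
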